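/- arXiv:2605.15825 — 3 statements merged into one kernel-verified Lean document; each statement's English description precedes it below -/
import Mathlib

section
/- Let μ, υ > -1, 0 < ρ ≤ 1 and r ∈ ℕ. Then for every t ∈ (0,1), d/dt { ρ^{-1} (1-t)^{ρμ+1} (1-(1-t)^ρ)^{υ+1} · d/dt 𝒫_r^{μ,υ,ρ}(t) } = - σ_r^{μ,υ} ϰ^{μ,υ,ρ}(t) 𝒫_r^{μ,υ,ρ}(t), where σ_r^{μ,υ} = r(r+μ+υ+1). That is, 𝒫_r^{μ,υ,ρ} is an eigenfunction of the associated singular Sturm–Liouville operator with eigenvalue σ_r^{μ,υ}. -/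
open Real MeasureTheory Finset

/-- The fractional backward Jacobi function of degree `r` with parameters `μ, υ, ρ`. -/
noncomputable def backJacobi (μ υ ρ : ℝ) (r : ℕ) (t : ℝ) : ℝ :=
  (Real.Gamma ((r : ℝ) + μ + 1) / ((Nat.factorial r : ℝ) * Real.Gamma ((r : ℝ) + μ + υ + 1))) *
    ∑ k ∈ Finset.range (r + 1),
      (Nat.choose r k : ℝ) * (-1 : ℝ) ^ k *
        (Real.Gamma ((r : ℝ) + (k : ℝ) + μ + υ + 1) / Real.Gamma ((k : ℝ) + μ + 1)) *
        (1 - t) ^ (ρ * (k : ℝ))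

/-- The backward Jacobi weight ϰ^{μ,υ,ρ} on (0,1). -/
noncomputable def backWeight (μ υ ρ t : ℝ) : ℝ :=
  ρ * (1 - t) ^ (ρ * (μ + 1) - 1) * (1 - (1 - t) ^ ρ) ^ υ

/-!
In the variable `y = (1 - t)^ρ` the function `𝒫_r^{μ,υ,ρ}` is a polynomial `q(y)`, a multiple of
the hypergeometric polynomial `₂F₁(-r, r+μ+υ+1; μ+1; y)`. Its coefficients satisfy the two-term
recurrence `(k+1)(k+μ+1) c_{k+1} = (k(k+μ+υ+1) - σ_r) c_k`, which says exactly that `q` solves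
`y(1-y) q'' + ((μ+1) - (μ+υ+2) y) q' + σ_r q = 0`, i.e.
`(y^{μ+1} (1-y)^{υ+1} q')' = -σ_r y^μ (1-y)^υ q`. Since `dy/dt = -ρ (1-t)^{ρ-1}`, the flux in `t`
is minus the flux in `y`, and the chain rule turns the `y`-equation into the claimed one, the
Jacobian `ρ (1-t)^{ρ-1} y^μ` making up the weight `ϰ^{μ,υ,ρ}`.
-/

open Polynomial Filter Topology
open scoped Nat

def SolvesJacobiODE (μ υ σ : ℝ) (p : ℝ[X]) : Prop :=
  X * (1 - X) * derivative (derivative p) + (C (μ + 1) - C (μ + υ + 2) * X) * derivative p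
    + C σ * p = 0

theorem solvesJacobiODE_of_coeff_succ {μ υ σ : ℝ} {p : ℝ[X]}
    (hp : ∀ n : ℕ, ((n : ℝ) + 1) * (n + μ + 1) * p.coeff (n + 1)
      = ((n : ℝ) * (n + μ + υ + 1) - σ) * p.coeff n) :
    SolvesJacobiODE μ υ σ p := by
  ext n
  rcases n with _ | _ | n
  all_goals simp only [mul_sub, sub_mul, mul_one, mul_assoc, coeff_add, coeff_sub, coeff_C_mul,
      coeff_X_mul, coeff_X_mul_zero, coeff_derivative, coeff_zero]
  all_goals push_cast
  · linear_combination hp 0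
  · linear_combination hp 1
  · have h := hp (n + 2)
    push_cast at h
    linear_combination h

theorem hasDerivAt_one_sub_rpow (ρ : ℝ) {t : ℝ} (ht : t < 1) :
    HasDerivAt (fun x => (1 - x) ^ ρ) (-(ρ * (1 - t) ^ (ρ - 1))) t := by
  simpa using ((hasDerivAt_id t).const_sub 1).rpow_const (p := ρ) (Or.inl (sub_pos.2 ht).ne')

theorem hasDerivAt_eval_one_sub_rpow (p : ℝ[X]) (ρ : ℝ) {t : ℝ} (ht : t < 1) :
    HasDerivAt (fun x => p.eval ((1 - x) ^ ρ))
      ((derivative p).eval ((1 - t) ^ ρ) * -(ρ * (1 - t) ^ (ρ - 1))) t :=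
  (p.hasDerivAt _).comp t (hasDerivAt_one_sub_rpow ρ ht)

namespace SolvesJacobiODE

theorem hasDerivAt_flux {μ υ σ : ℝ} {p : ℝ[X]} (hp : SolvesJacobiODE μ υ σ p) {y : ℝ}
    (hy : y ∈ Set.Ioo 0 1) :
    HasDerivAt (fun y => y ^ (μ + 1) * (1 - y) ^ (υ + 1) * (derivative p).eval y)
      (-σ * (y ^ μ * (1 - y) ^ υ) * p.eval y) y := by
  obtain ⟨hy0, hy1⟩ := hy
  have h1y : 1 - y ≠ 0 := by linarith
  have hode := congrArg (eval y) hp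
  simp only [eval_add, eval_mul, eval_sub, eval_X, eval_C, eval_one, eval_zero] at hode
  refine ((((hasDerivAt_rpow_const (p := μ + 1) (Or.inl hy0.ne')).fun_mul
    (hasDerivAt_one_sub_rpow (υ + 1) hy1)).fun_mul ((derivative p).hasDerivAt y))).congr_deriv ?_
  simp only [add_sub_cancel_right]
  rw [rpow_add_one hy0.ne', rpow_add_one h1y]
  linear_combination y ^ μ * (1 - y) ^ υ * hode

theorem deriv_fractional_flux {μ υ ρ σ : ℝ} {p : ℝ[X]} (hp : SolvesJacobiODE μ υ σ p)
    (hρ : 0 < ρ) {t : ℝ} (ht : t ∈ Set.Ioo 0 1) :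
    deriv (fun x => ρ⁻¹ * (1 - x) ^ (ρ * μ + 1) * (1 - (1 - x) ^ ρ) ^ (υ + 1) *
        deriv (fun x => p.eval ((1 - x) ^ ρ)) x) t
      = -σ * backWeight μ υ ρ t * p.eval ((1 - t) ^ ρ) := by
  obtain ⟨ht0, ht1⟩ := ht
  have hflux : (fun x => ρ⁻¹ * (1 - x) ^ (ρ * μ + 1) * (1 - (1 - x) ^ ρ) ^ (υ + 1) *
        deriv (fun x => p.eval ((1 - x) ^ ρ)) x)
      =ᶠ[𝓝 t] fun x => -(((1 - x) ^ ρ) ^ (μ + 1) * (1 - (1 - x) ^ ρ) ^ (υ + 1) *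
        (derivative p).eval ((1 - x) ^ ρ)) := by
    filter_upwards [Iio_mem_nhds ht1] with x hx
    have hx0 : 0 < 1 - x := sub_pos.2 hx
    have hpow : (1 - x) ^ (ρ * μ + 1) * (1 - x) ^ (ρ - 1) = ((1 - x) ^ ρ) ^ (μ + 1) := by
      rw [← rpow_add hx0, ← rpow_mul hx0.le]
      ring_nf
    rw [(hasDerivAt_eval_one_sub_rpow p ρ hx).deriv, ← hpow]
    field_simp
  have hy : (1 - t) ^ ρ ∈ Set.Ioo 0 1 :=
    ⟨rpow_pos_of_pos (by linarith) ρ, rpow_lt_one (by linarith) (by linarith) hρ⟩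
  have hweight : (1 - t) ^ (ρ * (μ + 1) - 1) = ((1 - t) ^ ρ) ^ μ * (1 - t) ^ (ρ - 1) := by
    rw [← rpow_mul (by linarith), ← rpow_add (by linarith)]
    ring_nf
  rw [hflux.deriv_eq]
  refine ((hp.hasDerivAt_flux hy).comp t (hasDerivAt_one_sub_rpow ρ ht1)).neg.deriv.trans ?_
  rw [backWeight, hweight]
  ring

end SolvesJacobiODE

noncomputable def jacobiCoeff (μ υ : ℝ) (r k : ℕ) : ℝ :=
  (r.choose k : ℝ) * (-1) ^ k * (Gamma (r + k + μ + υ + 1) / Gamma (k + μ + 1))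

theorem jacobiCoeff_eq_zero_of_lt {μ υ : ℝ} {r k : ℕ} (h : r < k) : jacobiCoeff μ υ r k = 0 := by
  simp [jacobiCoeff, Nat.choose_eq_zero_of_lt h]

theorem jacobiCoeff_succ {μ υ : ℝ} (hμ : -1 < μ) (hυ : -1 < υ) (r k : ℕ) :
    ((k : ℝ) + 1) * (k + μ + 1) * jacobiCoeff μ υ r (k + 1)
      = ((k : ℝ) * (k + μ + υ + 1) - r * (r + μ + υ + 1)) * jacobiCoeff μ υ r k := by
  rcases lt_trichotomy k r with hk | rfl | hk
  · have hk0 : (0 : ℝ) ≤ k := k.cast_nonneg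
    have hkr : (k : ℝ) + 1 ≤ r := by exact_mod_cast hk
    have hb : (k : ℝ) + μ + 1 ≠ 0 := by linarith
    have ha : (r : ℝ) + k + μ + υ + 1 ≠ 0 := by linarith
    have hchoose : (r.choose (k + 1) : ℝ) * (k + 1) = r.choose k * (r - k) := by
      have := congrArg (Nat.cast : ℕ → ℝ) (Nat.choose_succ_right_eq r k)
      push_cast [Nat.cast_sub hk.le] at this
      exact this
    have hq : ((k : ℝ) + μ + 1) * ((r + k + μ + υ + 1) / (k + μ + 1)) = r + k + μ + υ + 1 :=
      mul_div_cancel₀ _ hb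
    simp only [jacobiCoeff]
    push_cast
    rw [show (r : ℝ) + (k + 1) + μ + υ + 1 = (r + k + μ + υ + 1) + 1 by ring,
      show (k : ℝ) + 1 + μ + 1 = (k + μ + 1) + 1 by ring, Gamma_add_one ha, Gamma_add_one hb,
      mul_div_mul_comm, pow_succ]
    linear_combination
      (-((k : ℝ) + 1) * r.choose (k + 1) * (-1) ^ k *
        (Gamma (r + k + μ + υ + 1) / Gamma (k + μ + 1))) * hq
      - (-1) ^ k * (r + k + μ + υ + 1) * (Gamma (r + k + μ + υ + 1) / Gamma (k + μ + 1)) * hchoose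
  · simp [jacobiCoeff_eq_zero_of_lt (Nat.lt_succ_self k)]
  · simp [jacobiCoeff_eq_zero_of_lt hk, jacobiCoeff_eq_zero_of_lt (hk.trans (Nat.lt_succ_self k))]

noncomputable def jacobiPoly (μ υ : ℝ) (r : ℕ) : ℝ[X] :=
  C (Gamma (r + μ + 1) / (r ! * Gamma (r + μ + υ + 1))) *
    ∑ k ∈ range (r + 1), monomial k (jacobiCoeff μ υ r k)

theorem coeff_jacobiPoly (μ υ : ℝ) (r n : ℕ) :
    (jacobiPoly μ υ r).coeff n
      = Gamma (r + μ + 1) / (r ! * Gamma (r + μ + υ + 1)) * jacobiCoeff μ υ r n := by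
  rw [jacobiPoly, coeff_C_mul, finsetSum_coeff]
  simp only [coeff_monomial, sum_ite_eq', mem_range]
  split_ifs with hn
  · rfl
  · rw [jacobiCoeff_eq_zero_of_lt (by omega)]

theorem solvesJacobiODE_jacobiPoly {μ υ : ℝ} (hμ : -1 < μ) (hυ : -1 < υ) (r : ℕ) :
    SolvesJacobiODE μ υ (r * (r + μ + υ + 1)) (jacobiPoly μ υ r) :=
  solvesJacobiODE_of_coeff_succ fun n => by
    rw [coeff_jacobiPoly, coeff_jacobiPoly]
    linear_combination Gamma (r + μ + 1) / (r ! * Gamma (r + μ + υ + 1)) * jacobiCoeff_succ hμ hυ r n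

theorem backJacobi_eq_eval_jacobiPoly (μ υ ρ : ℝ) (r : ℕ) {t : ℝ} (ht : t ≤ 1) :
    backJacobi μ υ ρ r t = (jacobiPoly μ υ r).eval ((1 - t) ^ ρ) := by
  simp only [backJacobi, jacobiPoly, eval_mul, eval_C, eval_finsetSum, eval_monomial]
  congr 1
  refine sum_congr rfl fun k _ => ?_
  rw [jacobiCoeff, rpow_mul (sub_nonneg.2 ht), rpow_natCast]

theorem backJacobi_sturm_liouville_general
    (μ υ ρ : ℝ) (hμ : -1 < μ) (hυ : -1 < υ) (hρ0 : 0 < ρ) (r : ℕ) :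
    ∀ t ∈ Set.Ioo (0:ℝ) 1,
      deriv (fun x : ℝ =>
          ρ⁻¹ * (1 - x) ^ (ρ * μ + 1) * (1 - (1 - x) ^ ρ) ^ (υ + 1) *
            deriv (backJacobi μ υ ρ r) x) t
        = -((r : ℝ) * ((r : ℝ) + μ + υ + 1)) * backWeight μ υ ρ t * backJacobi μ υ ρ r t := by
  intro t ht
  have hP : ∀ x < 1, backJacobi μ υ ρ r x = (jacobiPoly μ υ r).eval ((1 - x) ^ ρ) :=
    fun x hx => backJacobi_eq_eval_jacobiPoly μ υ ρ r hx.le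
  have hderiv : ∀ x < 1, deriv (backJacobi μ υ ρ r) x
      = deriv (fun x => (jacobiPoly μ υ r).eval ((1 - x) ^ ρ)) x :=
    fun x hx => (eventuallyEq_of_mem (Iio_mem_nhds hx) hP).deriv_eq
  rw [(eventuallyEq_of_mem (Iio_mem_nhds ht.2) fun x hx => by rw [hderiv x hx]).deriv_eq, hP t ht.2,
    (solvesJacobiODE_jacobiPoly hμ hυ r).deriv_fractional_flux hρ0 ht]

/-- The fractional backward Jacobi functions are eigenfunctions of the singular
Sturm–Liouville operator, with eigenvalue σ_r^{μ,υ} = r(r+μ+υ+1). -/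
theorem backJacobi_sturm_liouville
    (μ υ ρ : ℝ) (hμ : -1 < μ) (hυ : -1 < υ) (hρ0 : 0 < ρ) (hρ1 : ρ ≤ 1) (r : ℕ) :
    ∀ t ∈ Set.Ioo (0:ℝ) 1,
      deriv (fun x : ℝ =>
          ρ⁻¹ * (1 - x) ^ (ρ * μ + 1) * (1 - (1 - x) ^ ρ) ^ (υ + 1) *
            deriv (backJacobi μ υ ρ r) x) t
        = -((r : ℝ) * ((r : ℝ) + μ + υ + 1)) * backWeight μ υ ρ t * backJacobi μ υ ρ r t :=
  backJacobi_sturm_liouville_general μ υ ρ hμ hυ hρ0 r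
end

section
/- Let 0 < ρ ≤ 1 and let μ, υ be real numbers with -1 < μ ≤ -1/2 and -1 < υ ≤ -1/2. Let f : [0,1] → ℝ be continuous on [0,1] and continuously differentiable on (0,1), with ∫₀¹ ϰ^{μ,υ,ρ}(t) f(t)² dt < ∞ and ∫₀¹ ϰ̃^{μ,υ,ρ}(t) f'(t)² dt < ∞, and suppose f(ξ) = 0 for some ξ ∈ [0,1]. Then sup_{t ∈ [0,1]} |f(t)| ≤ √2 · ( ∫₀¹ ϰ^{μ,υ,ρ}(t) f(t)² dt )^{1/4} · ( ∫₀¹ ϰ̃^{μ,υ,ρ}(t) f'(t)² dt )^{1/4}. -/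
open Real MeasureTheory

/-- The auxiliary weight ϰ̃^{μ,υ,ρ}(t) = ρ⁻¹ (1-t)^{ρμ+1} (1-(1-t)^ρ)^{υ+1}. -/
noncomputable def backWeightTilde (μ υ ρ t : ℝ) : ℝ :=
  ρ⁻¹ * (1 - t) ^ (ρ * μ + 1) * (1 - (1 - t) ^ ρ) ^ (υ + 1)

/-!
For `μ, υ ≤ -1/2` the product `ϰ ϰ̃` is at least `1` on `(0,1)`, so the Cauchy–Schwarz inequality
gives `(∫ |f f'|)² ≤ (∫ ϰ f²) (∫ ϰ̃ f'²)`. Since `f(ξ) = 0`, the fundamental theorem of calculus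
gives `f(t)² = ∫_ξ^t 2 f f' ≤ 2 ∫ |f f'|`, hence `f(t)⁴ ≤ 4 (∫ ϰ f²) (∫ ϰ̃ f'²)`.
-/

open Set Interval

lemma one_sub_rpow_nonneg {s ρ : ℝ} (hs₀ : 0 ≤ s) (hs₁ : s ≤ 1) (hρ : 0 ≤ ρ) :
    0 ≤ 1 - s ^ ρ :=
  sub_nonneg.2 (rpow_le_one hs₀ hs₁ hρ)

lemma backWeight_nonneg {μ υ ρ t : ℝ} (hρ : 0 ≤ ρ) (ht : t ∈ Icc 0 1) :
    0 ≤ backWeight μ υ ρ t := by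
  have hs : 0 ≤ 1 - t := by linarith [ht.2]
  have hc := one_sub_rpow_nonneg hs (by linarith [ht.1]) hρ
  unfold backWeight
  positivity

lemma backWeightTilde_nonneg {μ υ ρ t : ℝ} (hρ : 0 ≤ ρ) (ht : t ∈ Icc 0 1) :
    0 ≤ backWeightTilde μ υ ρ t := by
  have hs : 0 ≤ 1 - t := by linarith [ht.2]
  have hc := one_sub_rpow_nonneg hs (by linarith [ht.1]) hρ
  unfold backWeightTilde
  positivity

/-- With `s = 1 - t` and `c = 1 - s^ρ`, the product is `s^(ρ(2μ+1)) c^(2υ+1)` with both bases in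
`(0,1]` and both exponents nonpositive. -/
lemma one_le_backWeight_mul_backWeightTilde {μ υ ρ t : ℝ} (hμ : μ ≤ -(1/2)) (hυ : υ ≤ -(1/2))
    (hρ : 0 < ρ) (ht : t ∈ Ioo 0 1) :
    1 ≤ backWeight μ υ ρ t * backWeightTilde μ υ ρ t := by
  obtain ⟨ht₀, ht₁⟩ := ht
  have hs₀ : 0 < 1 - t := by linarith
  have hs₁ : 1 - t ≤ 1 := by linarith
  have hc₀ : 0 < 1 - (1 - t) ^ ρ := sub_pos.2 (rpow_lt_one hs₀.le (by linarith) hρ)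
  have hc₁ : 1 - (1 - t) ^ ρ ≤ 1 := sub_le_self _ (rpow_nonneg hs₀.le ρ)
  have hprod : backWeight μ υ ρ t * backWeightTilde μ υ ρ t =
      (1 - t) ^ (ρ * (μ + 1) - 1 + (ρ * μ + 1)) * (1 - (1 - t) ^ ρ) ^ (υ + (υ + 1)) := by
    rw [rpow_add hs₀, rpow_add hc₀]
    unfold backWeight backWeightTilde
    field_simp
  rw [hprod]
  exact one_le_mul_of_one_le_of_one_le
    (one_le_rpow_of_pos_of_le_one_of_nonpos hs₀ hs₁ (by nlinarith))
    (one_le_rpow_of_pos_of_le_one_of_nonpos hc₀ hc₁ (by linarith))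

/-- Multiplying by `w₁ > 0` turns the quadratic into `(w₁ |a| s - |b|)² + (w₁ w₂ - 1) b²`. -/
lemma quadratic_abs_mul_nonneg {w₁ w₂ : ℝ} (hw₁ : 0 ≤ w₁) (hw : 1 ≤ w₁ * w₂) (a b s : ℝ) :
    0 ≤ w₁ * a ^ 2 * (s * s) + -2 * |a * b| * s + w₂ * b ^ 2 := by
  have hw₁' : 0 < w₁ := lt_of_le_of_ne hw₁ (by rintro rfl; linarith [zero_mul w₂])
  refine nonneg_of_mul_nonneg_right ?_ hw₁'
  have hsq : w₁ * (w₁ * a ^ 2 * (s * s) + -2 * |a * b| * s + w₂ * b ^ 2) =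
      (w₁ * |a| * s - |b|) ^ 2 + (w₁ * w₂ - 1) * b ^ 2 := by
    rw [abs_mul]
    linear_combination (-(w₁ * s) ^ 2) * sq_abs a - sq_abs b
  rw [hsq]
  nlinarith [sq_nonneg (w₁ * |a| * s - |b|), sq_nonneg b]

section CauchySchwarz

variable {α : Type*} [MeasurableSpace α] {m : Measure α} {w₁ w₂ g h : α → ℝ}

lemma integrable_mul_of_one_le_mul (hw₁ : ∀ᵐ x ∂m, 0 ≤ w₁ x) (hw : ∀ᵐ x ∂m, 1 ≤ w₁ x * w₂ x)
    (hg : Integrable (fun x => w₁ x * g x ^ 2) m) (hh : Integrable (fun x => w₂ x * h x ^ 2) m)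
    (hgh : AEStronglyMeasurable (fun x => g x * h x) m) :
    Integrable (fun x => g x * h x) m := by
  refine Integrable.mono' ((hg.fun_add hh).div_const 2) hgh ?_
  filter_upwards [hw₁, hw] with x hx₁ hx
  have := quadratic_abs_mul_nonneg hx₁ hx (g x) (h x) 1
  rw [Real.norm_eq_abs]
  linarith

/-- The quadratic `s ↦ ∫ (w₁ g² s² - 2 |g h| s + w₂ h²)` is nonnegative, so its discriminant is
nonpositive. -/
lemma sq_integral_abs_mul_le_of_one_le_mul (hw₁ : ∀ᵐ x ∂m, 0 ≤ w₁ x)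
    (hw : ∀ᵐ x ∂m, 1 ≤ w₁ x * w₂ x)
    (hg : Integrable (fun x => w₁ x * g x ^ 2) m) (hh : Integrable (fun x => w₂ x * h x ^ 2) m)
    (hgh : AEStronglyMeasurable (fun x => g x * h x) m) :
    (∫ x, |g x * h x| ∂m) ^ 2 ≤ (∫ x, w₁ x * g x ^ 2 ∂m) * ∫ x, w₂ x * h x ^ 2 ∂m := by
  have habs := (integrable_mul_of_one_le_mul hw₁ hw hg hh hgh).abs
  have hquad : ∀ s : ℝ, 0 ≤ (∫ x, w₁ x * g x ^ 2 ∂m) * (s * s) +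
      -2 * (∫ x, |g x * h x| ∂m) * s + ∫ x, w₂ x * h x ^ 2 ∂m := by
    intro s
    have hint : 0 ≤ ∫ x, (w₁ x * g x ^ 2 * (s * s) + -2 * |g x * h x| * s + w₂ x * h x ^ 2) ∂m :=
      integral_nonneg_of_ae <| by
        filter_upwards [hw₁, hw] with x hx₁ hx using quadratic_abs_mul_nonneg hx₁ hx _ _ s
    have h₁ : Integrable (fun x => w₁ x * g x ^ 2 * (s * s)) m := hg.mul_const _
    have h₂ : Integrable (fun x => -2 * |g x * h x| * s) m := (habs.const_mul _).mul_const _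
    rwa [integral_add (h₁.fun_add h₂) hh, integral_add h₁ h₂, integral_mul_const,
      integral_mul_const, integral_const_mul] at hint
  have := discrim_le_zero hquad
  rw [discrim] at this
  linarith

end CauchySchwarz

lemma sq_le_two_mul_integral_abs_mul_deriv {f f' : ℝ → ℝ} {a b ξ t : ℝ}
    (hf : ContinuousOn f (Icc a b)) (hderiv : ∀ x ∈ Ioo a b, HasDerivAt f (f' x) x)
    (hint : IntegrableOn (fun x => f x * f' x) (Ioo a b)) (hξ : ξ ∈ Icc a b) (hfξ : f ξ = 0)
    (ht : t ∈ Icc a b) :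
    f t ^ 2 ≤ 2 * ∫ x in Ioo a b, |f x * f' x| := by
  have hint₂ : IntegrableOn (fun x => 2 * (f x * f' x)) (Ioc a b) :=
    ((integrableOn_Ioc_iff_integrableOn_Ioo).2 hint).const_mul 2
  have hsub : Ι ξ t ⊆ Ioc a b := Ioc_subset_Ioc (le_min hξ.1 ht.1) (max_le hξ.2 ht.2)
  have hftc : ∫ x in ξ..t, 2 * (f x * f' x) = f t ^ 2 - f ξ ^ 2 := by
    refine intervalIntegral.integral_eq_sub_of_hasDeriv_right (f := fun x => f x ^ 2)
      ((hf.mono (uIcc_subset_Icc hξ ht)).pow 2) (fun x hx => ?_)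
      (intervalIntegrable_iff.2 (hint₂.mono_set hsub))
    have hx' : x ∈ Ioo a b := Ioo_subset_Ioo (le_min hξ.1 ht.1) (max_le hξ.2 ht.2) hx
    convert ((hderiv x hx').fun_pow 2).hasDerivWithinAt using 1
    push_cast
    ring
  calc f t ^ 2 = |∫ x in ξ..t, 2 * (f x * f' x)| := by
        rw [hftc, hfξ, zero_pow two_ne_zero, sub_zero, abs_sq]
    _ ≤ ∫ x in Ι ξ t, |2 * (f x * f' x)| := by
      simpa only [Real.norm_eq_abs] using
        intervalIntegral.norm_integral_le_integral_norm_uIoc (f := fun x => 2 * (f x * f' x))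
    _ ≤ ∫ x in Ioc a b, |2 * (f x * f' x)| :=
      setIntegral_mono_set hint₂.abs (ae_of_all _ fun _ => abs_nonneg _) hsub.eventuallyLE
    _ = 2 * ∫ x in Ioo a b, |f x * f' x| := by
      simp only [abs_mul (2 : ℝ), abs_two]
      rw [integral_const_mul, integral_Ioc_eq_integral_Ioo]

lemma abs_le_sqrt_two_mul_rpow_mul_rpow {x A B C : ℝ} (hA : 0 ≤ A) (hB : 0 ≤ B)
    (hx : x ^ 2 ≤ 2 * C) (hC : C ^ 2 ≤ A * B) :
    |x| ≤ √2 * A ^ ((1 : ℝ) / 4) * B ^ ((1 : ℝ) / 4) := by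
  have hquarter : ∀ {y : ℝ}, 0 ≤ y → (y ^ ((1 : ℝ) / 4)) ^ 4 = y := fun hy => by
    simpa using rpow_inv_natCast_pow (n := 4) hy (by norm_num)
  have hsqrt : (√2) ^ 4 = 4 := by
    rw [show (4 : ℕ) = 2 * 2 from rfl, pow_mul, sq_sqrt zero_le_two]; norm_num
  refine (pow_le_pow_iff_left₀ (abs_nonneg x) (by positivity) (n := 4) (by norm_num)).1 ?_
  rw [mul_pow, mul_pow, hsqrt, hquarter hA, hquarter hB, pow_abs, abs_of_nonneg (by positivity)]
  nlinarith

theorem weighted_sobolev_inequality_general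
    (μ υ ρ : ℝ) (hμ1 : μ ≤ -(1/2)) (hυ1 : υ ≤ -(1/2))
    (hρ0 : 0 < ρ)
    (f : ℝ → ℝ)
    (hf : ContinuousOn f (Set.Icc 0 1))
    (hf' : ContDiffOn ℝ 1 f (Set.Ioo 0 1))
    (hint1 : IntegrableOn (fun t => backWeight μ υ ρ t * f t ^ 2) (Set.Ioo 0 1))
    (hint2 : IntegrableOn (fun t => backWeightTilde μ υ ρ t * (deriv f t) ^ 2) (Set.Ioo 0 1))
    (hzero : ∃ ξ ∈ Set.Icc (0:ℝ) 1, f ξ = 0) :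
    ∀ t ∈ Set.Icc (0:ℝ) 1,
      |f t| ≤ Real.sqrt 2 *
        (∫ t in (0:ℝ)..1, backWeight μ υ ρ t * f t ^ 2) ^ ((1:ℝ)/4) *
        (∫ t in (0:ℝ)..1, backWeightTilde μ υ ρ t * (deriv f t) ^ 2) ^ ((1:ℝ)/4) := by
  intro t ht
  obtain ⟨ξ, hξ, hfξ⟩ := hzero
  have hw₁ : ∀ᵐ x ∂volume.restrict (Ioo (0 : ℝ) 1), 0 ≤ backWeight μ υ ρ x :=
    ae_restrict_of_forall_mem measurableSet_Ioo fun x hx =>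
      backWeight_nonneg hρ0.le (Ioo_subset_Icc_self hx)
  have hw₂ : ∀ᵐ x ∂volume.restrict (Ioo (0 : ℝ) 1), 0 ≤ backWeightTilde μ υ ρ x :=
    ae_restrict_of_forall_mem measurableSet_Ioo fun x hx =>
      backWeightTilde_nonneg hρ0.le (Ioo_subset_Icc_self hx)
  have hw : ∀ᵐ x ∂volume.restrict (Ioo (0 : ℝ) 1),
      1 ≤ backWeight μ υ ρ x * backWeightTilde μ υ ρ x :=
    ae_restrict_of_forall_mem measurableSet_Ioo fun x hx =>
      one_le_backWeight_mul_backWeightTilde hμ1 hυ1 hρ0 hx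
  have hderiv : ∀ x ∈ Ioo (0 : ℝ) 1, HasDerivAt f (deriv f x) x := fun x hx =>
    ((hf'.differentiableOn one_ne_zero x hx).differentiableAt (isOpen_Ioo.mem_nhds hx)).hasDerivAt
  have hmeas : AEStronglyMeasurable (fun x => f x * deriv f x) (volume.restrict (Ioo 0 1)) :=
    ((hf.mono Ioo_subset_Icc_self).aestronglyMeasurable measurableSet_Ioo).mul
      (measurable_deriv f).aestronglyMeasurable
  have hsq := sq_le_two_mul_integral_abs_mul_deriv hf hderiv
    (integrable_mul_of_one_le_mul hw₁ hw hint1 hint2 hmeas) hξ hfξ ht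
  have hCS := sq_integral_abs_mul_le_of_one_le_mul hw₁ hw hint1 hint2 hmeas
  simp only [intervalIntegral.integral_of_le zero_le_one, integral_Ioc_eq_integral_Ioo]
  exact abs_le_sqrt_two_mul_rpow_mul_rpow
    (integral_nonneg_of_ae (hw₁.mono fun x hx => mul_nonneg hx (sq_nonneg _)))
    (integral_nonneg_of_ae (hw₂.mono fun x hx => mul_nonneg hx (sq_nonneg _))) hsq hCS

/-- Weighted Sobolev inequality: if f vanishes somewhere in [0,1] and
-1 < μ, υ ≤ -1/2, then the sup norm of f is bounded by
√2 ‖f‖^{1/2}_{ϰ^{μ,υ,ρ}} ‖f'‖^{1/2}_{ϰ̃^{μ,υ,ρ}}. -/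
theorem weighted_sobolev_inequality
    (μ υ ρ : ℝ) (hμ0 : -1 < μ) (hμ1 : μ ≤ -(1/2)) (hυ0 : -1 < υ) (hυ1 : υ ≤ -(1/2))
    (hρ0 : 0 < ρ) (hρ1 : ρ ≤ 1)
    (f : ℝ → ℝ)
    (hf : ContinuousOn f (Set.Icc 0 1))
    (hf' : ContDiffOn ℝ 1 f (Set.Ioo 0 1))
    (hint1 : IntegrableOn (fun t => backWeight μ υ ρ t * f t ^ 2) (Set.Ioo 0 1))
    (hint2 : IntegrableOn (fun t => backWeightTilde μ υ ρ t * (deriv f t) ^ 2) (Set.Ioo 0 1))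
    (hzero : ∃ ξ ∈ Set.Icc (0:ℝ) 1, f ξ = 0) :
    ∀ t ∈ Set.Icc (0:ℝ) 1,
      |f t| ≤ Real.sqrt 2 *
        (∫ t in (0:ℝ)..1, backWeight μ υ ρ t * f t ^ 2) ^ ((1:ℝ)/4) *
        (∫ t in (0:ℝ)..1, backWeightTilde μ υ ρ t * (deriv f t) ^ 2) ^ ((1:ℝ)/4) :=
  weighted_sobolev_inequality_general μ υ ρ hμ1 hυ1 hρ0 f hf hf' hint1 hint2 hzero
end

section
/- Let 0 < θ < 1, 0 < ν < 1-θ and 0 < ρ ≤ 1. Let K : [0,1]×[0,1] → ℝ be continuous with |K(t,ϱ)| ≤ M, and uniformly Hölder continuous of exponent ν in its first variable with constant L. Then there exists a constant c > 0, depending only on θ, ν, M, L and ρ, such that for every continuous f : [0,1] → ℝ and all t ≠ s in [0,1], |(𝒦_R f)(1-(1-t)^{1/ρ}) - (𝒦_R f)(1-(1-s)^{1/ρ})| ≤ c |t-s|^ν · sup_{[0,1]} |f|. Consequently the composed function t ↦ (𝒦_R f)(1-(1-t)^{1/ρ}) has C^{0,ν}([0,1]) norm bounded by c · sup_{[0,1]}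 |f|. -/
open Real MeasureTheory

/-- The weakly singular adjoint Volterra integral operator
(𝒦_R f)(t) = ∫_t^1 (ϱ-t)^{-θ} K(t,ϱ) f(ϱ) dϱ. -/
noncomputable def KR (θ : ℝ) (K : ℝ → ℝ → ℝ) (f : ℝ → ℝ) (t : ℝ) : ℝ :=
  ∫ ϱ in t..1, (ϱ - t) ^ (-θ) * K t ϱ * f ϱ

/-!
For `a ≤ b`, `𝒦_R f(a) - 𝒦_R f(b)` splits into the integral over `[a, b]`, a term carrying the
kernel difference `(ϱ - b)^{-θ} - (ϱ - a)^{-θ} ≥ 0` on `[b, 1]`, and a term carrying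
`K(a, ϱ) - K(b, ϱ)`. Integrating the kernels exactly bounds the first two by
`M ‖f‖ (b - a)^{1-θ} / (1-θ)` and the third by `L ‖f‖ (b - a)^ν / (1-θ)`, and
`(b - a)^{1-θ} ≤ (b - a)^ν` because `ν ≤ 1 - θ`. Finally the endpoint map
`t ↦ 1 - (1 - t)^{1/ρ}` is `1/ρ`-Lipschitz on `[0, 1]` since `1/ρ ≥ 1`.
-/

open Set intervalIntegral

lemma abs_rpow_sub_rpow_le_of_mem_Icc {p x y : ℝ} (hp : 1 ≤ p) (hx : x ∈ Icc (0 : ℝ) 1)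
    (hy : y ∈ Icc (0 : ℝ) 1) : |x ^ p - y ^ p| ≤ p * |x - y| := by
  have hderiv : ∀ z ∈ Icc (0 : ℝ) 1,
      HasDerivWithinAt (fun z : ℝ => z ^ p) (p * z ^ (p - 1)) (Icc 0 1) z :=
    fun z _ => (hasDerivAt_rpow_const (Or.inr hp)).hasDerivWithinAt
  have hbound : ∀ z ∈ Icc (0 : ℝ) 1, ‖p * z ^ (p - 1)‖ ≤ p := fun z hz => by
    rw [norm_mul, norm_of_nonneg (by linarith), norm_of_nonneg (rpow_nonneg hz.1 _)]
    exact mul_le_of_le_one_right (by linarith) (rpow_le_one hz.1 hz.2 (by linarith))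
  simpa only [norm_eq_abs] using
    (convex_Icc 0 1).norm_image_sub_le_of_norm_hasDerivWithin_le hderiv hbound hy hx

lemma one_sub_one_sub_rpow_mem_Icc {p t : ℝ} (hp : 0 ≤ p) (ht : t ∈ Icc (0 : ℝ) 1) :
    1 - (1 - t) ^ p ∈ Icc (0 : ℝ) 1 := by
  have h0 : 0 ≤ (1 - t) ^ p := rpow_nonneg (by linarith [ht.2]) _
  have h1 : (1 - t) ^ p ≤ 1 := rpow_le_one (by linarith [ht.2]) (by linarith [ht.1]) hp
  exact ⟨by linarith, by linarith⟩

lemma abs_one_sub_one_sub_rpow_sub_le {p t s : ℝ} (hp : 1 ≤ p) (ht : t ∈ Icc (0 : ℝ) 1)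
    (hs : s ∈ Icc (0 : ℝ) 1) : |(1 - (1 - t) ^ p) - (1 - (1 - s) ^ p)| ≤ p * |t - s| := by
  have h := abs_rpow_sub_rpow_le_of_mem_Icc hp (x := 1 - s) (y := 1 - t)
    ⟨by linarith [hs.2], by linarith [hs.1]⟩ ⟨by linarith [ht.2], by linarith [ht.1]⟩
  rwa [sub_sub_sub_cancel_left] at h ⊢

lemma intervalIntegrable_sub_rpow_neg {θ : ℝ} (hθ : θ < 1) (e a b : ℝ) :
    IntervalIntegrable (fun ϱ => (ϱ - e) ^ (-θ)) volume a b := by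
  simpa using (intervalIntegral.intervalIntegrable_rpow' (by linarith : (-1 : ℝ) < -θ)
    (a := a - e) (b := b - e)).comp_sub_right e

lemma integral_sub_rpow_neg {θ : ℝ} (hθ : θ < 1) (e a b : ℝ) :
    ∫ ϱ in a..b, (ϱ - e) ^ (-θ) = ((b - e) ^ (1 - θ) - (a - e) ^ (1 - θ)) / (1 - θ) := by
  rw [integral_comp_sub_right (fun x => x ^ (-θ)) e, integral_rpow (Or.inl (by linarith)),
    neg_add_eq_sub]

lemma abs_integral_mul_le_integral_mul {w g : ℝ → ℝ} {a b G : ℝ} (hab : a ≤ b)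
    (hw : IntervalIntegrable w volume a b) (hwg : ∀ x ∈ Ioc a b, 0 ≤ w x ∧ |g x| ≤ G) :
    |∫ x in a..b, w x * g x| ≤ (∫ x in a..b, w x) * G := by
  rw [← norm_eq_abs, ← intervalIntegral.integral_mul_const]
  refine norm_integral_le_of_norm_le hab (ae_of_all _ fun x hx => ?_) (hw.mul_const G)
  obtain ⟨hw0, hg⟩ := hwg x hx
  rw [norm_eq_abs, abs_mul, abs_of_nonneg hw0]
  exact mul_le_mul_of_nonneg_left hg hw0

section KR

variable {θ : ℝ} {K : ℝ → ℝ → ℝ} {f : ℝ → ℝ} {a b : ℝ}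

lemma KR_sub_KR_eq (hθ : θ < 1) (ha : 0 ≤ a) (hab : a ≤ b) (hb : b ≤ 1)
    (hKa : ContinuousOn (K a) (Icc 0 1)) (hKb : ContinuousOn (K b) (Icc 0 1))
    (hf : ContinuousOn f (Icc 0 1)) :
    KR θ K f a - KR θ K f b =
      (∫ ϱ in a..b, (ϱ - a) ^ (-θ) * (K a ϱ * f ϱ))
        - (∫ ϱ in b..1, ((ϱ - b) ^ (-θ) - (ϱ - a) ^ (-θ)) * (K a ϱ * f ϱ))
        + ∫ ϱ in b..1, (ϱ - b) ^ (-θ) * ((K a ϱ - K b ϱ) * f ϱ) := by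
  have hab01 : uIcc a b ⊆ Icc 0 1 := by
    rw [uIcc_of_le hab]; exact Icc_subset_Icc ha (by linarith)
  have hb101 : uIcc b 1 ⊆ Icc 0 1 := by
    rw [uIcc_of_le hb]; exact Icc_subset_Icc (by linarith) le_rfl
  have hint : ∀ e c d, uIcc c d ⊆ Icc 0 1 → ∀ g : ℝ → ℝ, ContinuousOn g (Icc 0 1) →
      IntervalIntegrable (fun ϱ => (ϱ - e) ^ (-θ) * g ϱ) volume c d :=
    fun e c d hcd g hg => (intervalIntegrable_sub_rpow_neg hθ e c d).mul_continuousOn (hg.mono hcd)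
  have hKaf : ContinuousOn (fun ϱ => K a ϱ * f ϱ) (Icc 0 1) := hKa.mul hf
  have htail : (∫ ϱ in b..1, (ϱ - a) ^ (-θ) * (K a ϱ * f ϱ))
      - ∫ ϱ in b..1, (ϱ - b) ^ (-θ) * (K b ϱ * f ϱ) =
      (∫ ϱ in b..1, (ϱ - b) ^ (-θ) * ((K a ϱ - K b ϱ) * f ϱ))
        - ∫ ϱ in b..1, ((ϱ - b) ^ (-θ) - (ϱ - a) ^ (-θ)) * (K a ϱ * f ϱ) := by
    rw [← integral_sub (hint a b 1 hb101 _ hKaf) (hint b b 1 hb101 (fun ϱ => K b ϱ * f ϱ) (hKb.mul hf)),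
      ← integral_sub (hint b b 1 hb101 (fun ϱ => (K a ϱ - K b ϱ) * f ϱ) ((hKa.sub hKb).mul hf))
        (((intervalIntegrable_sub_rpow_neg hθ b b 1).sub
          (intervalIntegrable_sub_rpow_neg hθ a b 1)).mul_continuousOn (hKaf.mono hb101))]
    exact integral_congr fun ϱ _ => by ring
  simp only [KR, mul_assoc]
  rw [← integral_add_adjacent_intervals (hint a a b hab01 _ hKaf) (hint a b 1 hb101 _ hKaf)]
  linarith

lemma abs_KR_sub_KR_le_of_le {ν M L F : ℝ} (hθ0 : 0 ≤ θ) (hθ1 : θ < 1) (hν0 : 0 ≤ ν)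
    (hν1 : ν ≤ 1 - θ) (hM : 0 ≤ M) (hL : 0 ≤ L) (ha : 0 ≤ a) (hab : a ≤ b) (hb : b ≤ 1)
    (hKa : ContinuousOn (K a) (Icc 0 1)) (hKb : ContinuousOn (K b) (Icc 0 1))
    (hKM : ∀ ϱ ∈ Icc (0 : ℝ) 1, |K a ϱ| ≤ M)
    (hKL : ∀ ϱ ∈ Icc (0 : ℝ) 1, |K a ϱ - K b ϱ| ≤ L * (b - a) ^ ν)
    (hf : ContinuousOn f (Icc 0 1)) (hfF : ∀ x ∈ Icc (0 : ℝ) 1, |f x| ≤ F) :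
    |KR θ K f a - KR θ K f b| ≤ (2 * M + L) / (1 - θ) * (b - a) ^ ν * F := by
  have hq : 0 < 1 - θ := by linarith
  have hF : 0 ≤ F := (abs_nonneg _).trans (hfF 0 ⟨le_rfl, zero_le_one⟩)
  have hab01 : Ioc a b ⊆ Icc 0 1 := Ioc_subset_Icc_self.trans (Icc_subset_Icc ha (by linarith))
  have hb101 : Ioc b 1 ⊆ Icc 0 1 := Ioc_subset_Icc_self.trans (Icc_subset_Icc (by linarith) le_rfl)
  have hKf : ∀ ϱ ∈ Icc (0 : ℝ) 1, |K a ϱ * f ϱ| ≤ M * F := fun ϱ hϱ => by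
    rw [abs_mul]; exact mul_le_mul (hKM ϱ hϱ) (hfF ϱ hϱ) (abs_nonneg _) hM
  have hdKf : ∀ ϱ ∈ Icc (0 : ℝ) 1, |(K a ϱ - K b ϱ) * f ϱ| ≤ L * (b - a) ^ ν * F :=
    fun ϱ hϱ => by
      rw [abs_mul]
      exact mul_le_mul (hKL ϱ hϱ) (hfF ϱ hϱ) (abs_nonneg _)
        (mul_nonneg hL (rpow_nonneg (by linarith) _))
  have hT1 := abs_integral_mul_le_integral_mul hab (intervalIntegrable_sub_rpow_neg hθ1 a a b)
    fun ϱ hϱ => ⟨rpow_nonneg (by linarith [hϱ.1]) _, hKf ϱ (hab01 hϱ)⟩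
  have hT2 := abs_integral_mul_le_integral_mul hb
    ((intervalIntegrable_sub_rpow_neg hθ1 b b 1).sub (intervalIntegrable_sub_rpow_neg hθ1 a b 1))
    fun ϱ hϱ => ⟨sub_nonneg.2 (rpow_le_rpow_of_nonpos (by linarith [hϱ.1]) (by linarith)
      (by linarith)), hKf ϱ (hb101 hϱ)⟩
  have hT3 := abs_integral_mul_le_integral_mul hb (intervalIntegrable_sub_rpow_neg hθ1 b b 1)
    fun ϱ hϱ => ⟨rpow_nonneg (by linarith [hϱ.1]) _, hdKf ϱ (hb101 hϱ)⟩
  have hpow : (b - a) ^ (1 - θ) ≤ (b - a) ^ ν :=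
    rpow_le_rpow_of_exponent_ge' (by linarith) (by linarith) hν0 hν1
  have hW1 : ∫ ϱ in a..b, (ϱ - a) ^ (-θ) ≤ (b - a) ^ ν / (1 - θ) := by
    rw [integral_sub_rpow_neg hθ1, sub_self, zero_rpow hq.ne', sub_zero]
    gcongr
  have hW2 : ∫ ϱ in b..1, ((ϱ - b) ^ (-θ) - (ϱ - a) ^ (-θ)) ≤ (b - a) ^ ν / (1 - θ) := by
    rw [integral_sub (intervalIntegrable_sub_rpow_neg hθ1 b b 1)
      (intervalIntegrable_sub_rpow_neg hθ1 a b 1), integral_sub_rpow_neg hθ1,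
      integral_sub_rpow_neg hθ1, sub_self, zero_rpow hq.ne', div_sub_div_same]
    have : (1 - b) ^ (1 - θ) ≤ (1 - a) ^ (1 - θ) := rpow_le_rpow (by linarith) (by linarith) hq.le
    gcongr
    linarith
  have hW3 : ∫ ϱ in b..1, (ϱ - b) ^ (-θ) ≤ 1 / (1 - θ) := by
    rw [integral_sub_rpow_neg hθ1, sub_self, zero_rpow hq.ne', sub_zero]
    gcongr
    exact rpow_le_one (by linarith) (by linarith) hq.le
  rw [KR_sub_KR_eq hθ1 ha hab hb hKa hKb hf]
  calc _ ≤ |∫ ϱ in a..b, (ϱ - a) ^ (-θ) * (K a ϱ * f ϱ)|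
        + |∫ ϱ in b..1, ((ϱ - b) ^ (-θ) - (ϱ - a) ^ (-θ)) * (K a ϱ * f ϱ)|
        + |∫ ϱ in b..1, (ϱ - b) ^ (-θ) * ((K a ϱ - K b ϱ) * f ϱ)| :=
        (abs_add_le _ _).trans (add_le_add_left (abs_sub _ _) _)
    _ ≤ (b - a) ^ ν / (1 - θ) * (M * F) + (b - a) ^ ν / (1 - θ) * (M * F)
        + 1 / (1 - θ) * (L * (b - a) ^ ν * F) := by
        gcongr ?_ + ?_ + ?_
        · exact hT1.trans (by gcongr)
        · exact hT2.trans (by gcongr)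
        · exact hT3.trans (by gcongr)
    _ = (2 * M + L) / (1 - θ) * (b - a) ^ ν * F := by ring

lemma abs_KR_sub_KR_le {ν M L F : ℝ} (hθ0 : 0 ≤ θ) (hθ1 : θ < 1) (hν0 : 0 ≤ ν)
    (hν1 : ν ≤ 1 - θ) (hM : 0 ≤ M) (hL : 0 ≤ L)
    (hK : ∀ t ∈ Icc (0 : ℝ) 1, ContinuousOn (K t) (Icc 0 1))
    (hKM : ∀ t ∈ Icc (0 : ℝ) 1, ∀ ϱ ∈ Icc (0 : ℝ) 1, |K t ϱ| ≤ M)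
    (hKL : ∀ t ∈ Icc (0 : ℝ) 1, ∀ s ∈ Icc (0 : ℝ) 1, ∀ ϱ ∈ Icc (0 : ℝ) 1,
      |K t ϱ - K s ϱ| ≤ L * |t - s| ^ ν)
    (hf : ContinuousOn f (Icc 0 1)) (hfF : ∀ x ∈ Icc (0 : ℝ) 1, |f x| ≤ F)
    (ha : a ∈ Icc (0 : ℝ) 1) (hb : b ∈ Icc (0 : ℝ) 1) :
    |KR θ K f a - KR θ K f b| ≤ (2 * M + L) / (1 - θ) * |a - b| ^ ν * F := by
  wlog hab : a ≤ b generalizing a b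
  · rw [abs_sub_comm, abs_sub_comm a]
    exact this hb ha (le_of_not_ge hab)
  have hba : |a - b| = b - a := by rw [abs_sub_comm, abs_of_nonneg (sub_nonneg.2 hab)]
  rw [hba]
  exact abs_KR_sub_KR_le_of_le hθ0 hθ1 hν0 hν1 hM hL ha.1 hab hb.2 (hK a ha) (hK b hb)
    (hKM a ha) (fun ϱ hϱ => hba ▸ hKL a ha b hb ϱ hϱ) hf hfF

end KR

/-- Hölder regularity of the weakly singular adjoint Volterra operator composed with the
backward endpoint map t ↦ 1-(1-t)^{1/ρ}: the composition is uniformly ν-Hölder with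
constant bounded by c · sup|f|, where c depends only on θ, ν, M, L, ρ. -/
theorem KR_holder_bound_transformed
    (θ ν ρ M L : ℝ) (hθ0 : 0 < θ) (hθ1 : θ < 1) (hν0 : 0 < ν) (hν1 : ν < 1 - θ)
    (hρ0 : 0 < ρ) (hρ1 : ρ ≤ 1) (hM : 0 ≤ M) (hL : 0 ≤ L) :
    ∃ c > 0, ∀ K : ℝ → ℝ → ℝ,
      ContinuousOn (fun p : ℝ × ℝ => K p.1 p.2) (Set.Icc 0 1 ×ˢ Set.Icc 0 1) →
      (∀ t ∈ Set.Icc (0:ℝ) 1, ∀ ϱ ∈ Set.Icc (0:ℝ) 1, |K t ϱ| ≤ M) →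
      (∀ t ∈ Set.Icc (0:ℝ) 1, ∀ s ∈ Set.Icc (0:ℝ) 1, ∀ ϱ ∈ Set.Icc (0:ℝ) 1,
        |K t ϱ - K s ϱ| ≤ L * |t - s| ^ ν) →
      ∀ f : ℝ → ℝ, ContinuousOn f (Set.Icc 0 1) →
        ∀ t ∈ Set.Icc (0:ℝ) 1, ∀ s ∈ Set.Icc (0:ℝ) 1, t ≠ s →
          |KR θ K f (1 - (1 - t) ^ (1 / ρ)) - KR θ K f (1 - (1 - s) ^ (1 / ρ))|
            ≤ c * |t - s| ^ ν * sSup ((fun x => |f x|) '' Set.Icc 0 1) := by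
  have hq : 0 < 1 - θ := by linarith
  have hp : 1 ≤ 1 / ρ := one_le_one_div hρ0 hρ1
  refine ⟨((2 * M + L) / (1 - θ) + 1) * (1 / ρ) ^ ν, by positivity, ?_⟩
  intro K hKc hKM hKL f hf t ht s hs _
  set F := sSup ((fun x => |f x|) '' Icc 0 1)
  have hK : ∀ t ∈ Icc (0 : ℝ) 1, ContinuousOn (K t) (Icc 0 1) := fun t ht =>
    hKc.comp (continuousOn_const.prodMk continuousOn_id) fun ϱ hϱ => ⟨ht, hϱ⟩
  have hfF : ∀ x ∈ Icc (0 : ℝ) 1, |f x| ≤ F := fun x hx =>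
    le_csSup (isCompact_Icc.image_of_continuousOn hf.abs).bddAbove ⟨x, hx, rfl⟩
  have hF : 0 ≤ F := (abs_nonneg _).trans (hfF 0 ⟨le_rfl, zero_le_one⟩)
  calc _ ≤ (2 * M + L) / (1 - θ) * |(1 - (1 - t) ^ (1 / ρ)) - (1 - (1 - s) ^ (1 / ρ))| ^ ν * F :=
        abs_KR_sub_KR_le hθ0.le hθ1 hν0.le hν1.le hM hL hK hKM hKL hf hfF
          (one_sub_one_sub_rpow_mem_Icc (by positivity) ht)
          (one_sub_one_sub_rpow_mem_Icc (by positivity) hs)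
    _ ≤ (2 * M + L) / (1 - θ) * (1 / ρ * |t - s|) ^ ν * F := by
        gcongr
        exact abs_one_sub_one_sub_rpow_sub_le hp ht hs
    _ = (2 * M + L) / (1 - θ) * (1 / ρ) ^ ν * |t - s| ^ ν * F := by
        rw [mul_rpow (by positivity) (abs_nonneg _)]
        ring
    _ ≤ ((2 * M + L) / (1 - θ) + 1) * (1 / ρ) ^ ν * |t - s| ^ ν * F := by
        gcongr
        linarith
end
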